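/- If M is a graded multiplication R-module and (P :_R M) is a graded classical S-primary ideal of R, then P is a graded classical S-primary submodule of M. -/

import Mathlib

variable {G : Type*} [AddCommGroup G] [DecidableEq G]
variable {R : Type*} [CommRing R] (𝒜 : G → AddSubmonoid R) [GradedRing 𝒜]
variable {M : Type*} [AddCommGroup M] [Module R M]
variable (ℳ : G → AddSubmonoid M) [SetLike.GradedSMul 𝒜 ℳ] [DirectSum.Decomposition ℳ]

/-- `P` is a graded submodule of the graded module `M`. -/
def IsGradedSubmodule (P : Submodule R M) : Prop :=
  ∀ m ∈ P, ∀ g : G, (DirectSum.decompose ℳ m g : M) ∈ P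

/-- `P` is a graded classical primary submodule of `M`. -/
def IsGrClPrimary (P : Submodule R M) : Prop :=
  IsGradedSubmodule ℳ P ∧ P ≠ ⊤ ∧
    ∀ x y : R, ∀ m : M, SetLike.IsHomogeneousElem 𝒜 x → SetLike.IsHomogeneousElem 𝒜 y →
      SetLike.IsHomogeneousElem ℳ m → (x * y) • m ∈ P →
        x • m ∈ P ∨ ∃ n : ℕ, 0 < n ∧ y ^ n • m ∈ P

/-- `P` is a graded classical `S`-primary submodule of `M`;
this includes the requirement `(P :_R M) ∩ S = ∅`. -/
def IsGrClSPrimary (S : Submonoid R) (P : Submodule R M) : Prop :=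
  IsGradedSubmodule ℳ P ∧ Disjoint ((P.colon ⊤ : Ideal R) : Set R) (S : Set R) ∧
    ∃ s ∈ S, ∀ x y : R, ∀ m : M, SetLike.IsHomogeneousElem 𝒜 x → SetLike.IsHomogeneousElem 𝒜 y →
      SetLike.IsHomogeneousElem ℳ m → (x * y) • m ∈ P →
        (s * x) • m ∈ P ∨ ∃ n : ℕ, 0 < n ∧ (s * y ^ n) • m ∈ P

/-- `Q` is a graded classical `S`-primary ideal of `R`; this includes `Q ∩ S = ∅`. -/
def IsGrClSPrimaryIdeal (S : Submonoid R) (Q : Ideal R) : Prop :=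
  Q.IsHomogeneous 𝒜 ∧ Disjoint (Q : Set R) (S : Set R) ∧
    ∃ s ∈ S, ∀ x y : R, SetLike.IsHomogeneousElem 𝒜 x → SetLike.IsHomogeneousElem 𝒜 y →
      x * y ∈ Q → s * x ∈ Q ∨ ∃ n : ℕ, 0 < n ∧ s * y ^ n ∈ Q

/-!
If `x y m ∈ P`, the cyclic submodule `N = R m` is graded, hence `N = (N :_R M) M`, and
`x y (N :_R M) ⊆ (P :_R M)`. As `(P :_R M)` is a graded ideal and `x, y` are homogeneous, this
descends to the homogeneous components `t` of elements of `(N :_R M)`, where the `S`-primary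
property gives `s x t ∈ (P :_R M)` unless some `s yⁿ ∈ (P :_R M)`. Hence either `s yⁿ m ∈ P`,
or `s x m ∈ s x (N :_R M) M ⊆ (P :_R M) M ⊆ P`.
-/

omit [AddCommGroup G] in
theorem decompose_apply_mem_of_isHomogeneousElem {N : Submodule R M} {z : M}
    (hz : SetLike.IsHomogeneousElem ℳ z) (hzN : z ∈ N) (g : G) :
    (DirectSum.decompose ℳ z g : M) ∈ N := by
  obtain ⟨i, hi⟩ := hz
  rcases eq_or_ne g i with rfl | h
  · rwa [DirectSum.decompose_of_mem_same ℳ hi]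
  · rw [DirectSum.decompose_of_mem_ne ℳ hi h.symm]
    exact N.zero_mem

include 𝒜 in
theorem isGradedSubmodule_span_singleton {m : M} (hm : SetLike.IsHomogeneousElem ℳ m) :
    IsGradedSubmodule ℳ (Submodule.span R {m}) := by
  classical
  rintro _ hz g
  obtain ⟨r, rfl⟩ := Submodule.mem_span_singleton.mp hz
  obtain ⟨d, hd⟩ := hm
  rw [← DirectSum.sum_support_decompose 𝒜 r, Finset.sum_smul, DirectSum.decompose_sum,
    DFinsupp.finsetSum_apply, AddSubmonoid.coe_finsetSum]
  refine Submodule.sum_mem _ fun i _ => decompose_apply_mem_of_isHomogeneousElem ℳ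
    ⟨i +ᵥ d, SetLike.GradedSMul.smul_mem (SetLike.coe_mem _) hd⟩
    (Submodule.smul_mem _ _ (Submodule.mem_span_singleton_self m)) g

theorem mul_mem_colon_of_smul_mem {P : Submodule R M} {S : Set M} {m : M} {r t : R}
    (hr : r • m ∈ P) (ht : t ∈ (Submodule.span R {m}).colon S) : r * t ∈ P.colon S := by
  refine Submodule.mem_colon.mpr fun u hu => ?_
  obtain ⟨c, hc⟩ := Submodule.mem_span_singleton.mp (Submodule.mem_colon.mp ht u hu)
  rw [mul_smul, ← hc, smul_comm]
  exact P.smul_mem c hr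

theorem smul_mem_of_forall_mul_mem_colon {N P : Submodule R M} {r : R} {m : M}
    (hN : N = N.colon ⊤ • ⊤) (h : ∀ t ∈ N.colon ⊤, r * t ∈ P.colon ⊤) (hm : m ∈ N) :
    r • m ∈ P := by
  rw [hN] at hm
  refine (Submodule.smul_le (P := P.comap (r • LinearMap.id))).mpr (fun t ht u _ => ?_) hm
  simpa only [Submodule.mem_comap, LinearMap.smul_apply, LinearMap.id_apply, smul_smul]
    using Submodule.mem_colon.mp (h t ht) u trivial

theorem Ideal.IsHomogeneous.mul_mem_or_of_mul_mul_mem {Q : Ideal R} (hQ : Q.IsHomogeneous 𝒜)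
    {s x y t : R} (hprim : ∀ a b : R, SetLike.IsHomogeneousElem 𝒜 a →
      SetLike.IsHomogeneousElem 𝒜 b → a * b ∈ Q → s * a ∈ Q ∨ ∃ n : ℕ, 0 < n ∧ s * b ^ n ∈ Q)
    (hx : SetLike.IsHomogeneousElem 𝒜 x) (hy : SetLike.IsHomogeneousElem 𝒜 y)
    (hxyt : x * y * t ∈ Q) : s * x * t ∈ Q ∨ ∃ n : ℕ, 0 < n ∧ s * y ^ n ∈ Q := by
  classical
  refine or_iff_not_imp_right.mpr fun hpow => ?_
  obtain ⟨i, hxy⟩ := hx.mul hy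
  rw [← DirectSum.sum_support_decompose 𝒜 t, Finset.mul_sum]
  refine Ideal.sum_mem _ fun g _ => ?_
  have hcomp : x * (DirectSum.decompose 𝒜 t g : R) * y ∈ Q := by
    rw [mul_right_comm, ← DirectSum.coe_decompose_mul_add_of_left_mem 𝒜 hxy]
    exact hQ (i + g) hxyt
  rw [mul_assoc]
  exact (hprim _ y (hx.mul ⟨g, SetLike.coe_mem _⟩) hy hcomp).resolve_right hpow

theorem isGrClSPrimary_of_multiplication (S : Submonoid R) (P : Submodule R M)
    (hgr : IsGradedSubmodule ℳ P)
    (hmul : ∀ Q : Submodule R M, IsGradedSubmodule ℳ Q →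
      Q = (Q.colon ⊤) • (⊤ : Submodule R M))
    (hcolon : IsGrClSPrimaryIdeal 𝒜 S (P.colon ⊤)) :
    IsGrClSPrimary 𝒜 ℳ S P := by
  obtain ⟨hcolon_gr, hcolon_disj, s, hsS, hprim⟩ := hcolon
  refine ⟨hgr, hcolon_disj, s, hsS, fun x y m hx hy hm hxym => ?_⟩
  by_cases hpow : ∃ n : ℕ, 0 < n ∧ s * y ^ n ∈ P.colon ⊤
  · obtain ⟨n, hn, h⟩ := hpow
    exact .inr ⟨n, hn, Submodule.mem_colon.mp h m trivial⟩
  · refine .inl <| smul_mem_of_forall_mul_mem_colon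
      (hmul _ (isGradedSubmodule_span_singleton 𝒜 ℳ hm)) (fun t ht => ?_)
      (Submodule.mem_span_singleton_self m)
    exact (hcolon_gr.mul_mem_or_of_mul_mul_mem 𝒜 hprim hx hy
      (mul_mem_colon_of_smul_mem hxym ht)).resolve_right hpow
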